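/- If condition (*) fails, then for every root state s, V*_{M_{k,N}}(s) − V*_{M_k}(s) ≤ ε_N, where ε_N := max_{j∈S} [ V*_{M_{k,N}}(j) − min_{i ∈ L^j_{N+1}} ( Z(i) + α^{N+1} V_{AS;0}(i) ) ]. -/
import Mathlib


open Finset

variable {S A : Type*} [Fintype S] [Fintype A] [DecidableEq S] [Nonempty S] [Nonempty A]

/-- Belief distribution after taking the blind action sequence `l` from root state `s`:
the `s`-th row of the product of the transition matrices along `l`. -/
noncomputable def belief (T : A → Matrix S S ℝ) (s : S) (l : List A) : S → ℝ :=
  fun s' => ((l.map T).prod) s s'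

/-- Expected one-step cost of action `a` under belief `B`. -/
def beliefCost (C : A → S → ℝ) (B : S → ℝ) (a : A) : ℝ := ∑ s, B s * C a s

/-- Belief obtained from `B` by one further (blind) transition under action `a`. -/
def beliefStep (T : A → Matrix S S ℝ) (B : S → ℝ) (a : A) : S → ℝ :=
  fun s' => ∑ s, B s * T a s s'

/-- Bellman optimality equation for the sensing-cost MDP `M_k`: at every state
`(s, l)` the value is the minimum, over actions `a`, of the blind continuation and
the sensing continuation. -/
def IsBellmanMk (T : A → Matrix S S ℝ) (C : A → S → ℝ) (α k : ℝ)
    (V : S → List A → ℝ) : Prop :=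
  ∀ (s : S) (l : List A),
    V s l = Finset.univ.inf' Finset.univ_nonempty (fun a : A =>
      min (beliefCost C (belief T s l) a + α * V s (l ++ [a]))
          (beliefCost C (belief T s l) a + k
            + α * ∑ j, beliefStep T (belief T s l) a j * V j []))

/-- Bellman optimality equations for the depth-`N` truncation `M_{k,N}`: below layer `N`
both blind and sensing actions are available; at layer `N` sensing is forced. -/
def IsBellmanMkTrunc (T : A → Matrix S S ℝ) (C : A → S → ℝ) (α k : ℝ) (N : ℕ)
    (V : S → List A → ℝ) : Prop :=
  (∀ (s : S) (l : List A), l.length < N →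
    V s l = Finset.univ.inf' Finset.univ_nonempty (fun a : A =>
      min (beliefCost C (belief T s l) a + α * V s (l ++ [a]))
          (beliefCost C (belief T s l) a + k
            + α * ∑ j, beliefStep T (belief T s l) a j * V j []))) ∧
  (∀ (s : S) (l : List A), l.length = N →
    V s l = Finset.univ.inf' Finset.univ_nonempty (fun a : A =>
      beliefCost C (belief T s l) a + k
        + α * ∑ j, beliefStep T (belief T s l) a j * V j []))
/-- Expected cumulative discounted cost of the blind action sequence `l` from root `s`. -/
noncomputable def Zcost (T : A → Matrix S S ℝ) (C : A → S → ℝ) (α : ℝ)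
    (s : S) (l : List A) : ℝ :=
  ∑ i : Fin l.length, α ^ (i : ℕ) * beliefCost C (belief T s (l.take i)) (l.get i)

/-- Zero-sensing-cost always-sense value at belief `B`: `min_a B·Q*(a)`. -/
noncomputable def VAS0 (Qstar : A → S → ℝ) (B : S → ℝ) : ℝ :=
  Finset.univ.inf' Finset.univ_nonempty (fun a : A => ∑ s, B s * Qstar a s)
/-- The suboptimality bound
`ε_N = max_j [ V*_{M_{k,N}}(j) − min_{i ∈ L^j_{N+1}} (Z(i) + α^{N+1} V_{AS;0}(i)) ]`,
where the layer-(N+1) descendants of `j` are indexed by action sequences of length `N+1`. -/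
noncomputable def epsBound (T : A → Matrix S S ℝ) (C : A → S → ℝ) (α : ℝ)
    (Qstar : A → S → ℝ) (N : ℕ) (VN : S → List A → ℝ) : ℝ :=
  Finset.univ.sup' Finset.univ_nonempty (fun j : S =>
    VN j [] - Finset.univ.inf' Finset.univ_nonempty
      (fun v : Fin (N + 1) → A =>
        Zcost T C α j (List.ofFn v)
          + α ^ (N + 1) * VAS0 Qstar (belief T j (List.ofFn v))))
set_option linter.unusedSectionVars false

noncomputable def Zrel (T : A → Matrix S S ℝ) (C : A → S → ℝ) (α : ℝ)
    (s : S) (l v : List A) : ℝ :=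
  ∑ i : Fin v.length, α ^ (i : ℕ) * beliefCost C (belief T s (l ++ v.take i)) (v.get i)

lemma belief_nil (T : A → Matrix S S ℝ) (s s' : S) :
    belief T s [] s' = if s = s' then 1 else 0 := by
  simp [belief, Matrix.one_apply]

lemma belief_cons (T : A → Matrix S S ℝ) (s s' : S) (a : A) (l : List A) :
    belief T s (a :: l) s' = ∑ j, T a s j * belief T j l s' := by
  simp [belief, Matrix.mul_apply]

lemma belief_append_singleton (T : A → Matrix S S ℝ) (s : S) (l : List A) (a : A) :
    belief T s (l ++ [a]) = beliefStep T (belief T s l) a := by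
  funext s'
  simp [belief, beliefStep, Matrix.mul_apply]

lemma belief_nonneg (T : A → Matrix S S ℝ) (hT : ∀ a s s', 0 ≤ T a s s')
    (s : S) (l : List A) (s' : S) : 0 ≤ belief T s l s' := by
  induction l generalizing s with
  | nil => rw [belief_nil]; split <;> norm_num
  | cons a l ih =>
    rw [belief_cons]
    exact Finset.sum_nonneg fun j _ => mul_nonneg (hT a s j) (ih j)

lemma belief_sum (T : A → Matrix S S ℝ) (hTsum : ∀ a s, ∑ s', T a s s' = 1)
    (s : S) (l : List A) : ∑ s', belief T s l s' = 1 := by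
  induction l generalizing s with
  | nil => simp [belief_nil]
  | cons a l ih =>
    simp only [belief_cons]
    rw [Finset.sum_comm]
    simp only [← Finset.mul_sum]
    simp [fun j => ih j, hTsum a s]

lemma dot_delta (T : A → Matrix S S ℝ) (j : S) (f : S → ℝ) :
    ∑ i, belief T j [] i * f i = f j := by
  simp [belief_nil]
set_option linter.unusedSectionVars false

lemma Zrel_nil_left (T : A → Matrix S S ℝ) (C : A → S → ℝ) (α : ℝ) (s : S) (v : List A) :
    Zrel T C α s [] v = Zcost T C α s v := by
  simp [Zrel, Zcost]

lemma Zrel_cons (T : A → Matrix S S ℝ) (C : A → S → ℝ) (α : ℝ) (s : S)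
    (l : List A) (a : A) (v : List A) :
    Zrel T C α s l (a :: v) =
      beliefCost C (belief T s l) a + α * Zrel T C α s (l ++ [a]) v := by
  unfold Zrel
  simp only [List.length_cons]
  rw [Fin.sum_univ_succ]
  simp only [List.length_cons, List.get_cons_succ, Fin.val_succ, Fin.val_zero, pow_zero,
    one_mul, List.take_succ_cons, Fin.val_zero, List.take_zero, List.append_nil,
    Fin.getElem_fin, List.get_eq_getElem, List.getElem_cons_zero, List.getElem_cons_succ]
  rw [Finset.mul_sum]
  congr 1
  apply Finset.sum_congr rfl
  intro i _
  rw [List.append_assoc, List.singleton_append]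
  ring

lemma Qdot (T : A → Matrix S S ℝ) (C : A → S → ℝ) (α : ℝ) (Vstar : S → ℝ)
    (Qstar : A → S → ℝ)
    (hQstar : ∀ a s, Qstar a s = C a s + α * ∑ s', T a s s' * Vstar s')
    (B : S → ℝ) (a : A) :
    ∑ s', B s' * Qstar a s' =
      beliefCost C B a + α * ∑ j, beliefStep T B a j * Vstar j := by
  simp only [hQstar, beliefCost, beliefStep, mul_add, Finset.sum_add_distrib]
  congr 1
  simp only [Finset.mul_sum, Finset.sum_mul]
  rw [Finset.sum_comm]
  exact Finset.sum_congr rfl fun i _ => Finset.sum_congr rfl fun j _ => by ring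

lemma V_ge_dot (T : A → Matrix S S ℝ) (C : A → S → ℝ) (α k : ℝ)
    (hα0 : 0 < α) (hα1 : α < 1) (hk : 0 < k)
    (hTnonneg : ∀ a s s', 0 ≤ T a s s') (hTsum : ∀ a s, ∑ s', T a s s' = 1)
    (Vstar : S → ℝ) (Qstar : A → S → ℝ)
    (hQstar : ∀ a s, Qstar a s = C a s + α * ∑ s', T a s s' * Vstar s')
    (hBellman : ∀ s, Vstar s =
      Finset.univ.inf' Finset.univ_nonempty (fun a : A => Qstar a s))
    (V : S → List A → ℝ) (hV : IsBellmanMk T C α k V)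
    (hVbdd : ∃ M, ∀ s l, |V s l| ≤ M) :
    ∀ (s : S) (l : List A), ∑ j, belief T s l j * Vstar j ≤ V s l := by
  obtain ⟨M, hM⟩ := hVbdd
  set D : Set ℝ := Set.range (fun p : S × List A =>
    ∑ j, belief T p.1 p.2 j * Vstar j - V p.1 p.2) with hD
  have hne : D.Nonempty := ⟨_, ⟨(Classical.arbitrary S, []), rfl⟩⟩
  set MV : ℝ := Finset.univ.sup' Finset.univ_nonempty (fun j : S => |Vstar j|) with hMV
  have hdotbdd : ∀ (s : S) (l : List A), ∑ j, belief T s l j * Vstar j ≤ MV := by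
    intro s l
    calc ∑ j, belief T s l j * Vstar j ≤ ∑ j, belief T s l j * MV := by
          apply Finset.sum_le_sum
          intro j _
          exact mul_le_mul_of_nonneg_left
            ((le_abs_self _).trans (Finset.le_sup' (fun j : S => |Vstar j|) (Finset.mem_univ j)))
            (belief_nonneg T hTnonneg s l j)
      _ = MV := by rw [← Finset.sum_mul, belief_sum T hTsum, one_mul]
  have hbdd : BddAbove D := by
    refine ⟨MV + M, ?_⟩
    rintro x ⟨⟨s, l⟩, rfl⟩
    have h1 := hdotbdd s l
    have h2 : -V s l ≤ M := (neg_le_abs _).trans (hM s l)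
    simp only
    linarith
  set δ : ℝ := sSup D with hδ
  have hmem : ∀ (s : S) (l : List A),
      ∑ j, belief T s l j * Vstar j - V s l ≤ δ := by
    intro s l
    exact le_csSup hbdd ⟨(s, l), rfl⟩
  have hVstar_le : ∀ (j : S), Vstar j - δ ≤ V j [] := by
    intro j
    have := hmem j []
    rw [dot_delta] at this
    linarith
  have key : ∀ (s : S) (l : List A),
      ∑ j, belief T s l j * Vstar j - V s l ≤ α * δ := by
    intro s l
    rw [hV s l]
    have hBn : ∀ j, 0 ≤ belief T s l j := belief_nonneg T hTnonneg s l
    have : ∀ a ∈ Finset.univ (α := A),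
        ∑ j, belief T s l j * Vstar j - α * δ ≤
        min (beliefCost C (belief T s l) a + α * V s (l ++ [a]))
          (beliefCost C (belief T s l) a + k
            + α * ∑ j, beliefStep T (belief T s l) a j * V j []) := by
      intro a _
      have hQa : ∑ j, belief T s l j * Vstar j ≤ ∑ s', belief T s l s' * Qstar a s' := by
        apply Finset.sum_le_sum
        intro j _
        apply mul_le_mul_of_nonneg_left _ (hBn j)
        rw [hBellman j]
        exact Finset.inf'_le _ (Finset.mem_univ a)
      rw [Qdot T C α Vstar Qstar hQstar] at hQa
      have hB'n : ∀ j, 0 ≤ beliefStep T (belief T s l) a j := by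
        intro j
        rw [← belief_append_singleton]
        exact belief_nonneg T hTnonneg s _ j
      have hB'sum : ∑ j, beliefStep T (belief T s l) a j = 1 := by
        rw [show (fun j => beliefStep T (belief T s l) a j) = belief T s (l ++ [a]) from
          (belief_append_singleton T s l a).symm]
        exact belief_sum T hTsum s _
      refine le_min ?_ ?_
      · -- blind branch
        have h1 := hmem s (l ++ [a])
        rw [belief_append_singleton] at h1
        nlinarith
      · -- sense branch
        have h2 : ∑ j, beliefStep T (belief T s l) a j * Vstar j - δ ≤
            ∑ j, beliefStep T (belief T s l) a j * V j [] := by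
          have : ∑ j, beliefStep T (belief T s l) a j * (Vstar j - δ) ≤
              ∑ j, beliefStep T (belief T s l) a j * V j [] := by
            exact Finset.sum_le_sum fun j _ =>
              mul_le_mul_of_nonneg_left (hVstar_le j) (hB'n j)
          calc ∑ j, beliefStep T (belief T s l) a j * Vstar j - δ
              = ∑ j, beliefStep T (belief T s l) a j * (Vstar j - δ) := by
                simp only [mul_sub, Finset.sum_sub_distrib, ← Finset.sum_mul, hB'sum, one_mul]
            _ ≤ _ := this
        nlinarith
    have := Finset.le_inf' Finset.univ_nonempty _ this
    linarith
  have hδle : δ ≤ α * δ := csSup_le hne (by rintro x ⟨⟨s, l⟩, rfl⟩; exact key s l)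
  have hδ0 : δ ≤ 0 := by nlinarith
  intro s l
  have := hmem s l
  linarith

lemma V_ge_VAS0 (T : A → Matrix S S ℝ) (C : A → S → ℝ) (α k : ℝ)
    (hα0 : 0 < α) (hα1 : α < 1) (hk : 0 < k)
    (hTnonneg : ∀ a s s', 0 ≤ T a s s') (hTsum : ∀ a s, ∑ s', T a s s' = 1)
    (Vstar : S → ℝ) (Qstar : A → S → ℝ)
    (hQstar : ∀ a s, Qstar a s = C a s + α * ∑ s', T a s s' * Vstar s')
    (hBellman : ∀ s, Vstar s =
      Finset.univ.inf' Finset.univ_nonempty (fun a : A => Qstar a s))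
    (V : S → List A → ℝ) (hV : IsBellmanMk T C α k V)
    (hVbdd : ∃ M, ∀ s l, |V s l| ≤ M) :
    ∀ (s : S) (l : List A), VAS0 Qstar (belief T s l) ≤ V s l := by
  have hlow := V_ge_dot T C α k hα0 hα1 hk hTnonneg hTsum Vstar Qstar hQstar hBellman
    V hV hVbdd
  have hVstar_le : ∀ j : S, Vstar j ≤ V j [] := by
    intro j
    have := hlow j []
    rwa [dot_delta] at this
  intro s l
  rw [hV s l]
  apply Finset.le_inf' Finset.univ_nonempty
  intro a _
  have hQa : ∑ s', belief T s l s' * Qstar a s' =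
      beliefCost C (belief T s l) a + α * ∑ j, beliefStep T (belief T s l) a j * Vstar j :=
    Qdot T C α Vstar Qstar hQstar _ a
  have hfirst : VAS0 Qstar (belief T s l) ≤ ∑ s', belief T s l s' * Qstar a s' :=
    Finset.inf'_le _ (Finset.mem_univ a)
  have hB'n : ∀ j, 0 ≤ beliefStep T (belief T s l) a j := by
    intro j
    rw [← belief_append_singleton]
    exact belief_nonneg T hTnonneg s _ j
  refine le_min ?_ ?_
  · -- blind
    have h1 := hlow s (l ++ [a])
    rw [belief_append_singleton] at h1
    nlinarith
  · -- sense
    have h2 : ∑ j, beliefStep T (belief T s l) a j * Vstar j ≤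
        ∑ j, beliefStep T (belief T s l) a j * V j [] :=
      Finset.sum_le_sum fun j _ => mul_le_mul_of_nonneg_left (hVstar_le j) (hB'n j)
    nlinarith

lemma Zrel_nil_right (T : A → Matrix S S ℝ) (C : A → S → ℝ) (α : ℝ) (s : S) (l : List A) :
    Zrel T C α s l [] = 0 := by simp [Zrel]


/-- If the condition `Z(i) + α^{N+1} V_{AS;0}(i) ≥ V*_{M_{k,N}}(j)` (for all roots `j`
and layer-(N+1) descendants `i` of `j`) fails, then for every root state `s`,
`V*_{M_{k,N}}(s) − V*_{M_k}(s) ≤ ε_N`. -/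
theorem truncation_suboptimality_epsilon_bound
    (T : A → Matrix S S ℝ) (C : A → S → ℝ) (α k : ℝ)
    (hα0 : 0 < α) (hα1 : α < 1) (hk : 0 < k)
    (hTnonneg : ∀ a s s', 0 ≤ T a s s') (hTsum : ∀ a s, ∑ s', T a s s' = 1)
    (Vstar : S → ℝ) (Qstar : A → S → ℝ)
    (hQstar : ∀ a s, Qstar a s = C a s + α * ∑ s', T a s s' * Vstar s')
    (hBellman : ∀ s, Vstar s =
      Finset.univ.inf' Finset.univ_nonempty (fun a : A => Qstar a s))
    (N : ℕ)
    (V : S → List A → ℝ) (hV : IsBellmanMk T C α k V)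
    (hVbdd : ∃ M, ∀ s l, |V s l| ≤ M)
    (VN : S → List A → ℝ) (hVN : IsBellmanMkTrunc T C α k N VN)
    (hfail : ¬ (∀ (j : S) (l : List A), l.length = N + 1 →
      Zcost T C α j l + α ^ (N + 1) * VAS0 Qstar (belief T j l) ≥ VN j [])) :
    ∀ s : S, VN s [] - V s [] ≤ epsBound T C α Qstar N VN := by
  have hVAS := V_ge_VAS0 T C α k hα0 hα1 hk hTnonneg hTsum Vstar Qstar hQstar hBellman
    V hV hVbdd
  set ε := epsBound T C α Qstar N VN with hεdef
  set Δ : ℝ := Finset.univ.sup' Finset.univ_nonempty (fun j : S => VN j [] - V j [])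
    with hΔdef
  set Δmax : ℝ := max Δ 0 with hΔmaxdef
  have hΔmax0 : 0 ≤ Δmax := le_max_right _ _
  have hΔterm : ∀ j : S, VN j [] - V j [] ≤ Δmax := fun j =>
    (Finset.le_sup' (fun j : S => VN j [] - V j []) (Finset.mem_univ j)).trans
      (le_max_left _ _)
  -- positivity of ε
  push_neg at hfail
  obtain ⟨j0, l0, hlen0, hlt0⟩ := hfail
  have hε_pos : 0 < ε := by
    have hofn : List.ofFn (fun i : Fin (N+1) => l0.get (Fin.cast hlen0.symm i)) = l0 := by
      apply List.ext_getElem (by simp [hlen0])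
      intro i h1 h2
      rw [List.getElem_ofFn]
      rfl
    have hinf_le : Finset.univ.inf' Finset.univ_nonempty
        (fun v : Fin (N + 1) → A =>
          Zcost T C α j0 (List.ofFn v)
            + α ^ (N + 1) * VAS0 Qstar (belief T j0 (List.ofFn v)))
        ≤ Zcost T C α j0 l0 + α ^ (N + 1) * VAS0 Qstar (belief T j0 l0) := by
      have := Finset.inf'_le (fun v : Fin (N + 1) → A =>
          Zcost T C α j0 (List.ofFn v)
            + α ^ (N + 1) * VAS0 Qstar (belief T j0 (List.ofFn v)))
        (Finset.mem_univ (fun i : Fin (N+1) => l0.get (Fin.cast hlen0.symm i)))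
      rwa [hofn] at this
    have hterm : (0:ℝ) < VN j0 [] - Finset.univ.inf' Finset.univ_nonempty
        (fun v : Fin (N + 1) → A =>
          Zcost T C α j0 (List.ofFn v)
            + α ^ (N + 1) * VAS0 Qstar (belief T j0 (List.ofFn v))) := by
      linarith
    have hsup := Finset.le_sup' (fun j : S =>
      VN j [] - Finset.univ.inf' Finset.univ_nonempty
        (fun v : Fin (N + 1) → A =>
          Zcost T C α j (List.ofFn v)
            + α ^ (N + 1) * VAS0 Qstar (belief T j (List.ofFn v))))
      (Finset.mem_univ j0)
    rw [hεdef]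
    unfold epsBound
    linarith
  -- shared sense-branch estimate
  have hsense : ∀ (s : S) (l : List A) (a0 : A),
      VN s l ≤ beliefCost C (belief T s l) a0 + k
        + α * ∑ j, beliefStep T (belief T s l) a0 j * VN j [] →
      beliefCost C (belief T s l) a0 + k
        + α * ∑ j, beliefStep T (belief T s l) a0 j * V j [] ≤ V s l →
      VN s l ≤ V s l + α * Δmax := by
    intro s l a0 h1 h2
    have hB'n : ∀ j, 0 ≤ beliefStep T (belief T s l) a0 j := by
      intro j
      rw [← belief_append_singleton]
      exact belief_nonneg T hTnonneg s _ j
    have hB'sum : ∑ j, beliefStep T (belief T s l) a0 j = 1 := by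
      rw [show (fun j => beliefStep T (belief T s l) a0 j) = belief T s (l ++ [a0]) from
        (belief_append_singleton T s l a0).symm]
      exact belief_sum T hTsum s _
    have h3 : ∑ j, beliefStep T (belief T s l) a0 j * VN j []
        ≤ (∑ j, beliefStep T (belief T s l) a0 j * V j []) + Δmax := by
      have : ∑ j, beliefStep T (belief T s l) a0 j * VN j []
          ≤ ∑ j, beliefStep T (belief T s l) a0 j * (V j [] + Δmax) :=
        Finset.sum_le_sum fun j _ =>
          mul_le_mul_of_nonneg_left (by linarith [hΔterm j]) (hB'n j)
      calc ∑ j, beliefStep T (belief T s l) a0 j * VN j []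
          ≤ ∑ j, beliefStep T (belief T s l) a0 j * (V j [] + Δmax) := this
        _ = (∑ j, beliefStep T (belief T s l) a0 j * V j []) + Δmax := by
            simp only [mul_add, Finset.sum_add_distrib, ← Finset.sum_mul, hB'sum, one_mul]
    nlinarith
  -- main claim by induction on remaining depth
  have claimK : ∀ (c : ℕ) (s : S) (l : List A), l.length + c = N →
      (∃ v : Fin (c+1) → A,
        Zrel T C α s l (List.ofFn v)
          + α ^ (c+1) * VAS0 Qstar (belief T s (l ++ List.ofFn v)) ≤ V s l)
      ∨ VN s l ≤ V s l + α * Δmax := by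
    intro c
    induction c with
    | zero =>
      intro s l hlen
      simp only [Nat.add_zero] at hlen
      obtain ⟨a0, -, ha0⟩ := Finset.exists_mem_eq_inf' (Finset.univ_nonempty (α := A))
        (fun a : A =>
          min (beliefCost C (belief T s l) a + α * V s (l ++ [a]))
              (beliefCost C (belief T s l) a + k
                + α * ∑ j, beliefStep T (belief T s l) a j * V j []))
      have hVeq : V s l = min (beliefCost C (belief T s l) a0 + α * V s (l ++ [a0]))
          (beliefCost C (belief T s l) a0 + k
            + α * ∑ j, beliefStep T (belief T s l) a0 j * V j []) := by
        rw [hV s l, ha0]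
      rcases le_total (beliefCost C (belief T s l) a0 + α * V s (l ++ [a0]))
          (beliefCost C (belief T s l) a0 + k
            + α * ∑ j, beliefStep T (belief T s l) a0 j * V j []) with hc | hc
      · -- blind is the minimizer
        left
        refine ⟨fun _ => a0, ?_⟩
        have hofn : List.ofFn (fun _ : Fin 1 => a0) = [a0] := by simp
        rw [hofn, Zrel_cons, Zrel_nil_right, pow_one]
        have hle := hVAS s (l ++ [a0])
        rw [hVeq, min_eq_left hc]
        nlinarith
      · -- sense is the minimizer
        right
        apply hsense s l a0
        · rw [hVN.2 s l hlen]
          exact Finset.inf'_le _ (Finset.mem_univ a0)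
        · rw [hVeq, min_eq_right hc]
    | succ c ih =>
      intro s l hlen
      have hlenN : l.length < N := by omega
      obtain ⟨a0, -, ha0⟩ := Finset.exists_mem_eq_inf' (Finset.univ_nonempty (α := A))
        (fun a : A =>
          min (beliefCost C (belief T s l) a + α * V s (l ++ [a]))
              (beliefCost C (belief T s l) a + k
                + α * ∑ j, beliefStep T (belief T s l) a j * V j []))
      have hVeq : V s l = min (beliefCost C (belief T s l) a0 + α * V s (l ++ [a0]))
          (beliefCost C (belief T s l) a0 + k
            + α * ∑ j, beliefStep T (belief T s l) a0 j * V j []) := by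
        rw [hV s l, ha0]
      rcases le_total (beliefCost C (belief T s l) a0 + α * V s (l ++ [a0]))
          (beliefCost C (belief T s l) a0 + k
            + α * ∑ j, beliefStep T (belief T s l) a0 j * V j []) with hc | hc
      · -- blind is the minimizer
        have hVeq' : V s l = beliefCost C (belief T s l) a0 + α * V s (l ++ [a0]) := by
          rw [hVeq, min_eq_left hc]
        rcases ih s (l ++ [a0]) (by simp [List.length_append]; omega) with ⟨v, hvle⟩ | hr
        · left
          refine ⟨Fin.cons a0 v, ?_⟩
          have hofn : List.ofFn (Fin.cons a0 v) = a0 :: List.ofFn v := by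
            rw [List.ofFn_succ]
            simp
          rw [List.append_assoc, List.singleton_append] at hvle
          rw [hofn, Zrel_cons]
          have hpow : α ^ (c + 1 + 1) = α * α ^ (c + 1) := by ring
          rw [hpow, hVeq']
          nlinarith [mul_le_mul_of_nonneg_left hvle hα0.le]
        · right
          have hVNle : VN s l ≤ beliefCost C (belief T s l) a0 + α * VN s (l ++ [a0]) := by
            rw [hVN.1 s l hlenN]
            exact (Finset.inf'_le _ (Finset.mem_univ a0)).trans (min_le_left _ _)
          rw [hVeq']
          nlinarith [mul_le_mul_of_nonneg_left hr hα0.le,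
            mul_nonneg (mul_nonneg (sub_nonneg.2 hα1.le) hα0.le) hΔmax0]
      · -- sense is the minimizer
        right
        apply hsense s l a0
        · rw [hVN.1 s l hlenN]
          exact (Finset.inf'_le _ (Finset.mem_univ a0)).trans (min_le_right _ _)
        · rw [hVeq, min_eq_right hc]
  -- root-level dichotomy
  have hroot : ∀ s : S, VN s [] - V s [] ≤ ε ∨ VN s [] - V s [] ≤ α * Δmax := by
    intro s
    rcases claimK N s [] (by simp) with ⟨v, hvle⟩ | hr
    · left
      rw [Zrel_nil_left, List.nil_append] at hvle
      have hinf_le : Finset.univ.inf' Finset.univ_nonempty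
          (fun v : Fin (N + 1) → A =>
            Zcost T C α s (List.ofFn v)
              + α ^ (N + 1) * VAS0 Qstar (belief T s (List.ofFn v)))
          ≤ Zcost T C α s (List.ofFn v)
              + α ^ (N + 1) * VAS0 Qstar (belief T s (List.ofFn v)) :=
        Finset.inf'_le _ (Finset.mem_univ v)
      have hsup := Finset.le_sup' (fun j : S =>
        VN j [] - Finset.univ.inf' Finset.univ_nonempty
          (fun v : Fin (N + 1) → A =>
            Zcost T C α j (List.ofFn v)
              + α ^ (N + 1) * VAS0 Qstar (belief T j (List.ofFn v))))
        (Finset.mem_univ s)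
      rw [hεdef]
      unfold epsBound
      linarith
    · right
      linarith
  have hαΔ : α * Δmax ≤ ε := by
    rcases le_or_gt (α * Δmax) ε with h | h
    · exact h
    · exfalso
      have hΔle : Δ ≤ α * Δmax := by
        apply Finset.sup'_le
        intro s _
        rcases hroot s with h1 | h1
        · linarith
        · exact h1
      have hd : Δmax ≤ α * Δmax :=
        max_le hΔle (mul_nonneg hα0.le hΔmax0)
      nlinarith
  intro s
  rcases hroot s with h | h
  · exact h
  · linarith
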